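/- With the notation of the group action B_T(V) = √(φ'(V)) B_t(φ(V)), if t and T are related by T = t.φ with φ(V) = V + a_2 V² + a_3 V³ + ..., then T_0 = t_0, T_1 = t_1 + a_2 t_0, and T_2 = t_2 + 4 a_2 (t_1 − 1) + (3 a_3 − a_2²) t_0. -/

import Mathlib

/-- Formal derivative of a power series. -/
noncomputable def d1 {R : Type*} [CommRing R] (f : PowerSeries R) : PowerSeries R :=
  PowerSeries.mk fun n => (n + 1 : ℕ) • PowerSeries.coeff (n + 1) f

/-- Composition of formal power series `f(g(V))`. -/
noncomputable def pcomp {R : Type*} [CommRing R] (f g : PowerSeries R) : PowerSeries R :=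
  PowerSeries.mk fun n => ∑ᶠ k : ℕ, PowerSeries.coeff k f * PowerSeries.coeff n (g ^ k)

/-- `B_t(v) = v - ∑_{i≥0} (t_i / i!) v^i`. -/
noncomputable def Bser {R : Type*} [CommRing R] [Algebra ℚ R] (t : ℕ → R) : PowerSeries R :=
  PowerSeries.mk fun i => (if i = 1 then (1 : R) else 0) - (i.factorial : ℚ)⁻¹ • t i

/-!
Since `φ` has no constant term, `[Vⁿ] B_t(φ(V))` only involves the coefficients `b_k` of `B_t`
with `k ≤ n`; with `φ = V + a₂V² + ⋯` the first three are `b₀`, `b₁`, `b₂ + a₂b₁`. Comparing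
coefficients in `s² = φ'` gives `s = 1 + a₂V + ½(3a₃ − a₂²)V² + ⋯`, and multiplying out the first
three coefficients of `s · B_t(φ(V))` yields the formulas once `tᵢ = i!(δ_{i,1} − bᵢ)` is substituted.
-/

open PowerSeries

section CommRing

variable {R : Type*} [CommRing R]

lemma coeff_pow_eq_zero_of_lt {φ : PowerSeries R} (hφ0 : constantCoeff φ = 0) {n k : ℕ}
    (h : n < k) : coeff n (φ ^ k) = 0 :=
  coeff_of_lt_order n ((Nat.cast_lt.2 h).trans_le (le_order_pow_of_constantCoeff_eq_zero k hφ0))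

lemma coeff_two_mul (f g : PowerSeries R) : coeff 2 (f * g) =
    coeff 2 f * constantCoeff g + coeff 1 f * coeff 1 g + coeff 2 g * constantCoeff f := by
  simp only [coeff_mul, Finset.Nat.sum_antidiagonal_succ, coeff_zero_eq_constantCoeff,
    Finset.HasAntidiagonal.antidiagonal_zero, Finset.sum_singleton]
  ring

lemma coeff_d1 (f : PowerSeries R) (n : ℕ) : coeff n (d1 f) = (n + 1) * coeff (n + 1) f := by
  simp [d1, nsmul_eq_mul]

section Composition

variable {φ : PowerSeries R} (hφ0 : constantCoeff φ = 0) (hφ1 : coeff 1 φ = 1)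
include hφ0

lemma coeff_pcomp (f : PowerSeries R) (n : ℕ) :
    coeff n (pcomp f φ) = ∑ k ∈ Finset.range (n + 1), coeff k f * coeff n (φ ^ k) := by
  rw [pcomp, coeff_mk]
  refine finsum_eq_finsetSum_of_support_subset _ fun k hk => ?_
  by_contra hkn
  simp only [Finset.coe_range, Set.mem_Iio, not_lt] at hkn
  exact hk (by simp only [coeff_pow_eq_zero_of_lt hφ0 hkn, mul_zero])

lemma constantCoeff_pcomp (f : PowerSeries R) :
    constantCoeff (pcomp f φ) = constantCoeff f := by
  simp_rw [← coeff_zero_eq_constantCoeff_apply, coeff_pcomp hφ0]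
  simp

include hφ1

lemma coeff_one_pcomp (f : PowerSeries R) : coeff 1 (pcomp f φ) = coeff 1 f := by
  simp [coeff_pcomp hφ0, Finset.sum_range_succ, hφ1]

lemma coeff_two_pcomp (f : PowerSeries R) :
    coeff 2 (pcomp f φ) = coeff 2 f + coeff 2 φ * coeff 1 f := by
  simp only [coeff_pcomp hφ0, Finset.sum_range_succ, Finset.range_one, Finset.sum_singleton,
    pow_zero, pow_one, pow_two, coeff_one, coeff_two_mul, hφ0, hφ1, OfNat.ofNat_ne_zero, ↓reduceIte]
  ring

end Composition

section SquareRoot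

variable {φ s : PowerSeries R} (hs2 : s ^ 2 = d1 φ) (hs0 : constantCoeff s = 1)
include hs2 hs0

lemma two_mul_coeff_one_of_sq_eq_d1 : 2 * coeff 1 s = 2 * coeff 2 φ := by
  have h := congrArg (coeff 1) hs2
  rw [pow_two, coeff_one_mul, coeff_d1, hs0] at h
  linear_combination h

lemma two_mul_coeff_two_of_sq_eq_d1 (hs1 : coeff 1 s = coeff 2 φ) :
    2 * coeff 2 s = 3 * coeff 3 φ - coeff 2 φ ^ 2 := by
  have h := congrArg (coeff 2) hs2
  rw [pow_two, coeff_two_mul, coeff_d1, hs0, hs1] at h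
  linear_combination h

end SquareRoot

end CommRing

section RatAlgebra

variable {R : Type*} [CommRing R] [Algebra ℚ R]

lemma isUnit_two_of_ratAlgebra : IsUnit (2 : R) := by
  simpa only [map_ofNat] using (two_ne_zero : (2 : ℚ) ≠ 0).isUnit.map (algebraMap ℚ R)

lemma coeff_one_of_sq_eq_d1 {φ s : PowerSeries R} (hs2 : s ^ 2 = d1 φ)
    (hs0 : constantCoeff s = 1) : coeff 1 s = coeff 2 φ :=
  isUnit_two_of_ratAlgebra.mul_left_cancel (two_mul_coeff_one_of_sq_eq_d1 hs2 hs0)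

lemma factorial_smul_sub_coeff_Bser (t : ℕ → R) (i : ℕ) :
    (i.factorial : ℚ) • ((if i = 1 then (1 : R) else 0) - coeff i (Bser t)) = t i := by
  rw [Bser, coeff_mk, sub_sub_cancel, smul_smul, mul_inv_cancel₀ (by positivity), one_smul]

end RatAlgebra

/-- If `t` and `T` are related by `T = t.φ`, i.e.
`B_T(V) = √(φ'(V)) B_t(φ(V))`, where `φ(V) = V + a₂V² + a₃V³ + ⋯`, then
`T₀ = t₀`, `T₁ = t₁ + a₂ t₀`, and `T₂ = t₂ + 4a₂(t₁ − 1) + (3a₃ − a₂²) t₀`.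
Here `s = √(φ')` is the unique square root of `φ'` in `1 + V·R⟦V⟧`, and `Tᵢ` is read
off from `B_T` via `Tᵢ = i!(δ_{i,1} − [Vⁱ]B_T(V))`. -/
theorem action_first_coefficients {R : Type*} [CommRing R] [Algebra ℚ R]
    (φ s : PowerSeries R)
    (hφ0 : PowerSeries.constantCoeff φ = 0)
    (hφ1 : PowerSeries.coeff 1 φ = 1)
    (hs2 : s ^ 2 = d1 φ)
    (hs0 : PowerSeries.constantCoeff s = 1)
    (t T : ℕ → R)
    (hT : ∀ i, T i = (i.factorial : ℚ) •
      ((if i = 1 then (1 : R) else 0) - PowerSeries.coeff i (s * pcomp (Bser t) φ))) :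
    T 0 = t 0 ∧
    T 1 = t 1 + PowerSeries.coeff 2 φ * t 0 ∧
    T 2 = t 2 + 4 * PowerSeries.coeff 2 φ * (t 1 - 1) +
      (3 * PowerSeries.coeff 3 φ - (PowerSeries.coeff 2 φ) ^ 2) * t 0 := by
  have hs1 := coeff_one_of_sq_eq_d1 hs2 hs0
  have h2s2 := two_mul_coeff_two_of_sq_eq_d1 hs2 hs0 hs1
  simp only [hT, ← factorial_smul_sub_coeff_Bser t, Algebra.smul_def, map_one, map_ofNat,
    coeff_zero_eq_constantCoeff_apply, map_mul, coeff_one_mul, coeff_two_mul,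
    constantCoeff_pcomp hφ0, coeff_one_pcomp hφ0 hφ1, coeff_two_pcomp hφ0 hφ1, hs0, hs1,
    Nat.factorial_zero, Nat.factorial_one, Nat.factorial_two, Nat.cast_one, Nat.cast_ofNat,
    zero_ne_one, OfNat.ofNat_ne_one, ↓reduceIte]
  exact ⟨by ring, by ring, by linear_combination (-constantCoeff (Bser t)) * h2s2⟩
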